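/- Fix σ > 0, T > 0, R > 0 and a positive integer N̄. Let 0 < t₁ < … < t_l ≤ T with l ≤ N̄. Let G be the l×l matrix with entries G_{jk} = σ²·min(t_j, t_k), and let v ∈ ℝ^l be the vector with entries v_j = σ²·(t_l·t_j − t_j²/2). Then G + R·I_l is invertible and the vector κ̃ := (G + R·I_l)⁻¹ v satisfies Σ_{j=1}^{l} |κ̃_j| ≤ N̄·σ²·T² / (2R). -/

import Mathlib

open Matrix MeasureTheory

/-!
`min (t i) (t j)` is the Lebesgue measure of `(0, t i] ∩ (0, t j]`, so the Brownian-motion Gram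
matrix `G` is positive semidefinite and `M = G + R • 1` is positive definite. For `κ = M⁻¹ v`
this gives `R ‖κ‖₂² ≤ κ ⬝ᵥ M κ = κ ⬝ᵥ v ≤ ‖v‖_∞ ‖κ‖₁`, and Cauchy–Schwarz `‖κ‖₁² ≤ l ‖κ‖₂²`
turns this into `‖κ‖₁ ≤ l ‖v‖_∞ / R`. Finally `0 ≤ t_l t_j - t_j² / 2 ≤ t_l² / 2 ≤ T² / 2`.
-/

theorem Matrix.posSemidef_of_min {ι : Type*} [Finite ι] {t : ι → ℝ} (ht : ∀ i, 0 ≤ t i) :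
    (Matrix.of fun i j => min (t i) (t j)).PosSemidef := by
  convert posSemidef_matrix_measure_inter (μ := volume) (s := fun i => Set.Ioc 0 (t i))
    (fun _ => measurableSet_Ioc) (fun _ => measure_Ioc_lt_top.ne) using 1
  ext i j
  simp [Set.Ioc_inter_Ioc, le_min (ht i) (ht j)]

theorem Matrix.PosSemidef.add_smul_one_posDef {n : Type*} [Fintype n] [DecidableEq n]
    {G : Matrix n n ℝ} (hG : G.PosSemidef) {R : ℝ} (hR : 0 < R) : (G + R • 1).PosDef :=
  PosDef.posSemidef_add hG (PosDef.smul PosDef.one hR)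

theorem Matrix.PosSemidef.mul_dotProduct_self_le {n : Type*} [Fintype n] [DecidableEq n]
    {G : Matrix n n ℝ} (hG : G.PosSemidef) (R : ℝ) (x : n → ℝ) :
    R * (x ⬝ᵥ x) ≤ x ⬝ᵥ ((G + R • 1) *ᵥ x) := by
  have hGx : 0 ≤ x ⬝ᵥ (G *ᵥ x) := by simpa using hG.dotProduct_mulVec_nonneg x
  rw [add_mulVec, smul_mulVec, one_mulVec, dotProduct_add, dotProduct_smul, smul_eq_mul]
  linarith

theorem sum_abs_le_of_mul_dotProduct_self_le {ι : Type*} [Fintype ι] {x v : ι → ℝ} {R c : ℝ}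
    (hR : 0 < R) (hv : ∀ i, |v i| ≤ c) (hxv : R * (x ⬝ᵥ x) ≤ x ⬝ᵥ v) :
    ∑ i, |x i| ≤ Fintype.card ι * c / R := by
  set S := ∑ i, |x i|
  have hS : 0 ≤ S := Finset.sum_nonneg fun i _ => abs_nonneg (x i)
  have hc : 0 ≤ Fintype.card ι * c := by
    simpa using Finset.sum_nonneg fun i (_ : i ∈ Finset.univ) => (abs_nonneg (v i)).trans (hv i)
  have hxv_le : x ⬝ᵥ v ≤ c * S := by
    rw [Finset.mul_sum]
    refine Finset.sum_le_sum fun i _ => ?_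
    calc x i * v i ≤ |x i| * |v i| := by rw [← abs_mul]; exact le_abs_self _
      _ ≤ c * |x i| := by rw [mul_comm]; exact mul_le_mul_of_nonneg_right (hv i) (abs_nonneg _)
  have hCS : S ^ 2 ≤ Fintype.card ι * (x ⬝ᵥ x) := by
    simpa [S, dotProduct, sq_abs, ← sq] using
      sq_sum_le_card_mul_sum_sq (s := Finset.univ) (f := fun i => |x i|)
  have hRS : R * S ^ 2 ≤ Fintype.card ι * c * S := by nlinarith
  rw [le_div_iff₀ hR]
  rcases hS.eq_or_lt with hS0 | hSpos
  · rw [← hS0]; simpa using hc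
  · nlinarith

theorem abs_mul_sub_sq_div_two_le {s u T : ℝ} (hs : 0 ≤ s) (hsu : s ≤ u) (huT : u ≤ T) :
    |u * s - s ^ 2 / 2| ≤ T ^ 2 / 2 := by
  rw [abs_le]
  constructor <;> nlinarith [sq_nonneg (u - s)]

theorem kernel_prefactor_row_l1_bound_general
    (σ T R : ℝ) (hR : 0 < R)
    (Nbar l : ℕ) (hl : 0 < l) (hlN : l ≤ Nbar)
    (t : Fin l → ℝ) (hmono : StrictMono t) (hpos : ∀ j, 0 < t j)
    (hle : t ⟨l - 1, Nat.sub_lt hl Nat.one_pos⟩ ≤ T)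
    (G : Matrix (Fin l) (Fin l) ℝ)
    (hG : G = Matrix.of fun j k => σ ^ 2 * min (t j) (t k))
    (v : Fin l → ℝ)
    (hv : ∀ j, v j =
      σ ^ 2 * (t ⟨l - 1, Nat.sub_lt hl Nat.one_pos⟩ * t j - (t j) ^ 2 / 2)) :
    IsUnit (G + R • (1 : Matrix (Fin l) (Fin l) ℝ)) ∧
      ∑ j, |((G + R • (1 : Matrix (Fin l) (Fin l) ℝ))⁻¹).mulVec v j| ≤
        (Nbar : ℝ) * σ ^ 2 * T ^ 2 / (2 * R) := by
  have hGpsd : G.PosSemidef := by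
    have hG' : G = σ ^ 2 • Matrix.of fun j k => min (t j) (t k) := by rw [hG, smul_of]; rfl
    rw [hG']
    exact (posSemidef_of_min fun j => (hpos j).le).smul (sq_nonneg σ)
  have hM : IsUnit (G + R • 1) := (hGpsd.add_smul_one_posDef hR).isUnit
  refine ⟨hM, ?_⟩
  have hsolve : (G + R • 1) *ᵥ ((G + R • 1)⁻¹ *ᵥ v) = v := by
    rw [mulVec_mulVec, mul_nonsing_inv _ ((isUnit_iff_isUnit_det _).mp hM), one_mulVec]
  have hvbound : ∀ j, |v j| ≤ σ ^ 2 * (T ^ 2 / 2) := fun j => by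
    rw [hv, abs_mul, abs_of_nonneg (sq_nonneg σ)]
    exact mul_le_mul_of_nonneg_left (abs_mul_sub_sq_div_two_le (hpos j).le
      (hmono.monotone (Fin.le_def.mpr (Nat.le_sub_one_of_lt j.isLt))) hle) (sq_nonneg σ)
  have hl1 := sum_abs_le_of_mul_dotProduct_self_le hR hvbound
    (hsolve ▸ hGpsd.mul_dotProduct_self_le R _)
  calc _ ≤ (l : ℝ) * (σ ^ 2 * (T ^ 2 / 2)) / R := by simpa using hl1
    _ ≤ (Nbar : ℝ) * (σ ^ 2 * (T ^ 2 / 2)) / R := by gcongr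
    _ = (Nbar : ℝ) * σ ^ 2 * T ^ 2 / (2 * R) := by ring

/-- Core of Lemma D.1 (bound on the kernel prefactor of the Gaussian ODE filter):
for `0 < t₁ < … < t_l ≤ T` with `l ≤ N̄`, the Gram matrix
`G_{jk} = σ²·min(t_j,t_k)` regularized by `R·I` is invertible and the row
`κ̃ = (G + R·I)⁻¹ v` with `v_j = σ²(t_l·t_j − t_j²/2)` satisfies
`∑_j |κ̃_j| ≤ N̄·σ²·T²/(2R)`. -/
theorem kernel_prefactor_row_l1_bound
    (σ T R : ℝ) (hσ : 0 < σ) (hT : 0 < T) (hR : 0 < R)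
    (Nbar l : ℕ) (hNbar : 0 < Nbar) (hl : 0 < l) (hlN : l ≤ Nbar)
    (t : Fin l → ℝ) (hmono : StrictMono t) (hpos : ∀ j, 0 < t j)
    (hle : t ⟨l - 1, Nat.sub_lt hl Nat.one_pos⟩ ≤ T)
    (G : Matrix (Fin l) (Fin l) ℝ)
    (hG : G = Matrix.of fun j k => σ ^ 2 * min (t j) (t k))
    (v : Fin l → ℝ)
    (hv : ∀ j, v j =
      σ ^ 2 * (t ⟨l - 1, Nat.sub_lt hl Nat.one_pos⟩ * t j - (t j) ^ 2 / 2)) :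
    IsUnit (G + R • (1 : Matrix (Fin l) (Fin l) ℝ)) ∧
      ∑ j, |((G + R • (1 : Matrix (Fin l) (Fin l) ℝ))⁻¹).mulVec v j| ≤
        (Nbar : ℝ) * σ ^ 2 * T ^ 2 / (2 * R) :=
  kernel_prefactor_row_l1_bound_general σ T R hR Nbar l hl hlN t hmono hpos hle G hG v hv
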